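/- Let X_1,…,X_n be the spins of an Ising model with interaction matrix J (a real symmetric matrix with zero diagonal), i.e. X ∈ {±1}^n has law P(x) ∝ exp(Σ_{i<j} J_{ij} x_i x_j). Then for every i ∈ [n], |E[X_i] − tanh(J_i · E[X])| ≤ sqrt(Var(J_i · X)), where J_i is the i-th row of J and J_i · X = Σ_j J_{ij} X_j. -/

import Mathlib

open Finset

noncomputable section
open scoped Classical

/-- The ±1 value of a Boolean spin. -/
def spin (b : Bool) : ℝ := if b then 1 else -1

/-- The Ising Hamiltonian `∑_{i<j} J i j * x i * x j`. -/
def ham {n : ℕ} (J : Matrix (Fin n) (Fin n) ℝ) (x : Fin n → Bool) : ℝ :=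
  ∑ i : Fin n, ∑ j : Fin n, if i < j then J i j * spin (x i) * spin (x j) else 0

/-- The partition function. -/
def partZ {n : ℕ} (J : Matrix (Fin n) (Fin n) ℝ) : ℝ :=
  ∑ x : Fin n → Bool, Real.exp (ham J x)

/-- The Boltzmann (Gibbs) distribution `P(x) = exp(ham J x)/Z`. -/
def boltz {n : ℕ} (J : Matrix (Fin n) (Fin n) ℝ) (x : Fin n → Bool) : ℝ :=
  Real.exp (ham J x) / partZ J

/-- Expectation of `g` under the Boltzmann distribution. -/
def bExp {n : ℕ} (J : Matrix (Fin n) (Fin n) ℝ) (g : (Fin n → Bool) → ℝ) : ℝ :=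
  ∑ x : Fin n → Bool, boltz J x * g x


/-! Flipping spin `i` fixes the local field `h = J_i · X` and shifts the energy by `-2 X_i h`
(the Hamiltonian is half the quadratic form of `J`). Pairing every configuration with its flip
gives the exact identity `E[X_i] = E[tanh h]`. As `tanh` is 1-Lipschitz,
`|E[tanh h] - tanh E[h]| ≤ E|h - E[h]|`, and Jensen's inequality bounds the latter by
`sqrt (Var h)`. -/

open Real Matrix

namespace Real

theorem hasDerivAt_tanh (x : ℝ) : HasDerivAt tanh (1 / cosh x ^ 2) x := by
  have h := (hasDerivAt_sinh x).div (hasDerivAt_cosh x) (cosh_pos x).ne'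
  rw [← sq, ← sq, cosh_sq_sub_sinh_sq] at h
  rw [show tanh = fun y => sinh y / cosh y from funext tanh_eq_sinh_div_cosh]
  exact h

theorem lipschitzWith_one_tanh : LipschitzWith 1 tanh := by
  refine lipschitzWith_of_nnnorm_deriv_le (fun x => (hasDerivAt_tanh x).differentiableAt)
    fun x => ?_
  rw [(hasDerivAt_tanh x).deriv, ← NNReal.coe_le_coe, coe_nnnorm, norm_eq_abs, NNReal.coe_one,
    abs_of_pos (by positivity), div_le_one (by positivity)]
  nlinarith [one_le_cosh x]

theorem one_sub_tanh_mul_exp (x : ℝ) : (1 - tanh x) * exp x = (1 + tanh x) * exp (-x) := by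
  rw [tanh_eq_sinh_div_cosh, sinh_eq, cosh_eq]
  field_simp
  ring

end Real

section WeightedMean

variable {α : Type*} [Fintype α] {w : α → ℝ}

theorem sum_mul_sub_mean_sq (hw : ∑ x, w x = 1) (f : α → ℝ) :
    ∑ x, w x * (f x - ∑ y, w y * f y) ^ 2 = ∑ x, w x * f x ^ 2 - (∑ x, w x * f x) ^ 2 := by
  set m := ∑ y, w y * f y
  calc ∑ x, w x * (f x - m) ^ 2
      = ∑ x, (w x * f x ^ 2 - 2 * m * (w x * f x) + m ^ 2 * w x) :=
        sum_congr rfl fun x _ => by ring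
    _ = ∑ x, w x * f x ^ 2 - 2 * m * ∑ x, w x * f x + m ^ 2 * ∑ x, w x := by
        rw [sum_add_distrib, sum_sub_distrib, ← mul_sum, ← mul_sum]
    _ = ∑ x, w x * f x ^ 2 - m ^ 2 := by rw [hw]; ring

theorem sum_mul_abs_sub_mean_le_sqrt (hw0 : ∀ x, 0 ≤ w x) (hw1 : ∑ x, w x = 1)
    (f : α → ℝ) :
    ∑ x, w x * |f x - ∑ y, w y * f y|
      ≤ √(∑ x, w x * f x ^ 2 - (∑ x, w x * f x) ^ 2) := by
  have jensen := (convexOn_pow 2).map_sum_le (t := univ) (w := w)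
    (p := fun x => |f x - ∑ y, w y * f y|) (fun x _ => hw0 x) hw1
    fun x _ => Set.mem_Ici.2 (abs_nonneg _)
  simp only [smul_eq_mul, sq_abs] at jensen
  rw [← sum_mul_sub_mean_sq hw1]
  exact (le_abs_self _).trans (abs_le_sqrt jensen)

theorem abs_sum_mul_comp_sub_comp_sum_le (hw0 : ∀ x, 0 ≤ w x) (hw1 : ∑ x, w x = 1)
    {φ : ℝ → ℝ} (hφ : LipschitzWith 1 φ) (f : α → ℝ) :
    |∑ x, w x * φ (f x) - φ (∑ x, w x * f x)| ≤ ∑ x, w x * |f x - ∑ y, w y * f y| := by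
  set m := ∑ y, w y * f y
  calc |∑ x, w x * φ (f x) - φ m| = |∑ x, w x * (φ (f x) - φ m)| := by
        simp only [mul_sub, sum_sub_distrib, ← sum_mul, hw1, one_mul]
    _ ≤ ∑ x, |w x * (φ (f x) - φ m)| := abs_sum_le_sum_abs _ _
    _ ≤ ∑ x, w x * |f x - m| := sum_le_sum fun x _ => by
        rw [abs_mul, abs_of_nonneg (hw0 x)]
        exact mul_le_mul_of_nonneg_left (by simpa [dist_eq] using hφ.dist_le_mul (f x) m) (hw0 x)

end WeightedMean

theorem Function.Involutive.sum_eq_zero {α : Type*} [Fintype α] {σ : α → α}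
    (hσ : Function.Involutive σ) {f : α → ℝ} (hf : ∀ x, f x + f (σ x) = 0) :
    ∑ x, f x = 0 := by
  have hperm : ∑ x, f (σ x) = ∑ x, f x := Equiv.sum_comp hσ.toPerm f
  have hpair : ∑ x, (f x + f (σ x)) = 0 := Finset.sum_eq_zero fun x _ => hf x
  rw [sum_add_distrib, hperm] at hpair
  linarith

theorem Matrix.IsSymm.update_dotProduct_mulVec_update {ι R : Type*} [Fintype ι] [DecidableEq ι]
    [CommRing R] {A : Matrix ι ι R} (hsym : A.IsSymm) (hdiag : ∀ i, A i i = 0) (v : ι → R)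
    (i : ι) (t : R) :
    Function.update v i t ⬝ᵥ A *ᵥ Function.update v i t
      = v ⬝ᵥ A *ᵥ v + 2 * (t - v i) * (A *ᵥ v) i := by
  have hupd : Function.update v i t = v + Pi.single i (t - v i) := by
    ext j
    rcases eq_or_ne j i with rfl | hj <;> simp [*]
  have hvA : v ᵥ* A = A *ᵥ v := by rw [← vecMul_transpose, hsym.eq]
  have hAii : (A *ᵥ Pi.single i (t - v i)) i = 0 := by
    change (fun j => A i j) ⬝ᵥ _ = 0
    rw [dotProduct_single, hdiag, zero_mul]
  rw [hupd, mulVec_add, add_dotProduct, dotProduct_add, dotProduct_add,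
    dotProduct_mulVec v A (Pi.single i _), hvA, dotProduct_single, single_dotProduct,
    single_dotProduct, hAii]
  ring

section Gibbs

variable {n : ℕ} (J : Matrix (Fin n) (Fin n) ℝ)

theorem partZ_pos : 0 < partZ J :=
  sum_pos (fun _ _ => exp_pos _) univ_nonempty

theorem boltz_nonneg (x : Fin n → Bool) : 0 ≤ boltz J x :=
  div_nonneg (exp_pos _).le (partZ_pos J).le

theorem sum_boltz : ∑ x, boltz J x = 1 := by
  rw [← div_self (partZ_pos J).ne', partZ, sum_div]
  rfl

theorem bExp_eq_sum_div (g : (Fin n → Bool) → ℝ) :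
    bExp J g = (∑ x, exp (ham J x) * g x) / partZ J := by
  rw [sum_div]
  exact sum_congr rfl fun x _ => div_mul_eq_mul_div _ _ _

theorem sum_mul_bExp (c : Fin n → ℝ) (g : Fin n → (Fin n → Bool) → ℝ) :
    ∑ j, c j * bExp J (g j) = bExp J (fun x => ∑ j, c j * g j x) := by
  simp only [bExp, mul_sum]
  rw [sum_comm]
  exact sum_congr rfl fun x _ => sum_congr rfl fun j _ => by ring

end Gibbs

def localField {n : ℕ} (J : Matrix (Fin n) (Fin n) ℝ) (i : Fin n) (x : Fin n → Bool) : ℝ :=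
  ∑ j, J i j * spin (x j)

def flipAt {n : ℕ} (i : Fin n) (x : Fin n → Bool) : Fin n → Bool :=
  Function.update x i (!x i)

theorem flipAt_involutive {n : ℕ} (i : Fin n) : Function.Involutive (flipAt i) := by
  intro x
  simp [flipAt]

theorem spin_not (b : Bool) : spin (!b) = -spin b := by
  cases b <;> simp [spin]

theorem spin_comp_flipAt {n : ℕ} (i : Fin n) (x : Fin n → Bool) :
    spin ∘ flipAt i x = Function.update (spin ∘ x) i (-spin (x i)) := by
  rw [flipAt, ← spin_not, Function.comp_update]

section Ising

variable {n : ℕ} {J : Matrix (Fin n) (Fin n) ℝ}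

theorem two_mul_ham (hsym : J.IsSymm) (hdiag : ∀ i, J i i = 0) (x : Fin n → Bool) :
    2 * ham J x = (spin ∘ x) ⬝ᵥ J *ᵥ (spin ∘ x) := by
  set T : Fin n → Fin n → ℝ := fun a b => J a b * spin (x a) * spin (x b)
  have hT : ∀ a b, T a b = (if a < b then T a b else 0) + (if b < a then T b a else 0) := by
    intro a b
    rcases lt_trichotomy a b with h | rfl | h
    · simp [h, h.not_gt]
    · simp [T, hdiag]
    · simp only [h, h.not_gt, if_true, if_false, zero_add, T, hsym.apply]
      ring
  calc 2 * ham J x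
      = ∑ a, ∑ b, (if a < b then T a b else 0)
          + ∑ a, ∑ b, (if b < a then T b a else 0) := by
        rw [two_mul, sum_comm (f := fun a b => if b < a then T b a else 0)]
        rfl
    _ = ∑ a, ∑ b, T a b := by
        simp only [← sum_add_distrib, ← hT]
    _ = (spin ∘ x) ⬝ᵥ J *ᵥ (spin ∘ x) := by
        simp only [dotProduct, mulVec, mul_sum, Function.comp_apply, T]
        exact sum_congr rfl fun a _ => sum_congr rfl fun b _ => by ring

theorem ham_flipAt (hsym : J.IsSymm) (hdiag : ∀ i, J i i = 0) (i : Fin n) (x : Fin n → Bool) :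
    ham J (flipAt i x) = ham J x - 2 * spin (x i) * localField J i x := by
  have h := hsym.update_dotProduct_mulVec_update hdiag (spin ∘ x) i (-spin (x i))
  rw [← spin_comp_flipAt, ← two_mul_ham hsym hdiag, ← two_mul_ham hsym hdiag] at h
  have hL : (J *ᵥ spin ∘ x) i = localField J i x := rfl
  rw [hL, Function.comp_apply] at h
  linarith

theorem localField_flipAt (hdiag : ∀ i, J i i = 0) (i : Fin n) (x : Fin n → Bool) :
    localField J i (flipAt i x) = localField J i x := by
  refine sum_congr rfl fun j _ => ?_
  rcases eq_or_ne j i with rfl | hj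
  · simp [hdiag]
  · rw [flipAt, Function.update_of_ne hj]

theorem sum_exp_ham_mul_spin_sub_tanh (hsym : J.IsSymm) (hdiag : ∀ i, J i i = 0) (i : Fin n) :
    ∑ x, exp (ham J x) * (spin (x i) - tanh (localField J i x)) = 0 := by
  refine (flipAt_involutive i).sum_eq_zero fun x => ?_
  obtain ⟨R, hR⟩ : ∃ R, ham J x = R + spin (x i) * localField J i x :=
    ⟨_, (sub_add_cancel _ _).symm⟩
  have hflip : ham J (flipAt i x) = R + -spin (x i) * localField J i x := by
    rw [ham_flipAt hsym hdiag, hR]; ring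
  have hxi : flipAt i x i = !x i := Function.update_self ..
  rw [hR, hflip, hxi, localField_flipAt hdiag, spin_not, exp_add, exp_add]
  have hsech := one_sub_tanh_mul_exp (localField J i x)
  cases x i
  · simp only [spin, Bool.false_eq_true, if_false, neg_neg, neg_one_mul, one_mul]
    linear_combination exp R * hsech
  · simp only [spin, if_true, neg_one_mul, one_mul]
    linear_combination exp R * hsech

theorem bExp_spin_eq_bExp_tanh_localField (hsym : J.IsSymm) (hdiag : ∀ i, J i i = 0)
    (i : Fin n) :
    bExp J (fun x => spin (x i)) = bExp J (fun x => tanh (localField J i x)) := by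
  have h := sum_exp_ham_mul_spin_sub_tanh hsym hdiag i
  simp only [mul_sub, sum_sub_distrib, sub_eq_zero] at h
  rw [bExp_eq_sum_div, bExp_eq_sum_div, h]

end Ising

/-- The error in the mean-field equation at coordinate `i` is controlled by the standard
deviation of the local field: `|E[X_i] − tanh(J_i · E[X])| ≤ sqrt(Var(J_i · X))`. -/
theorem mean_field_equation_error {n : ℕ} (J : Matrix (Fin n) (Fin n) ℝ)
    (hsym : J.IsSymm) (hdiag : ∀ i, J i i = 0) (i : Fin n) :
    |bExp J (fun x => spin (x i))
        - Real.tanh (∑ j : Fin n, J i j * bExp J (fun x => spin (x j)))|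
      ≤ Real.sqrt (bExp J (fun x => (∑ j : Fin n, J i j * spin (x j)) ^ 2)
          - (bExp J (fun x => ∑ j : Fin n, J i j * spin (x j))) ^ 2) := by
  rw [sum_mul_bExp, bExp_spin_eq_bExp_tanh_localField hsym hdiag i]
  exact (abs_sum_mul_comp_sub_comp_sum_le (boltz_nonneg J) (sum_boltz J) lipschitzWith_one_tanh
    (localField J i)).trans (sum_mul_abs_sub_mean_le_sqrt (boltz_nonneg J) (sum_boltz J) _)

end
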